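/- For every integer n ≥ 1 and every natural number i with 0 < i < 2^{n−1}, one has pol_i(p_n) ≡ 0 (mod 2) in ℤ[x_1,…,x_n]. -/
import Mathlib


open MvPolynomial

/-- `Φ n x₀ x = ∏_{I ⊆ {1,…,n}} (x₀ + ∑_{i ∈ I} x i)`. -/
def Phi {R : Type*} [CommRing R] (n : ℕ) (x0 : R) (x : ℕ → R) : R :=
  ∏ I ∈ (Finset.Icc 1 n).powerset, (x0 + ∑ i ∈ I, x i)

/-- `p_n = Φ_n(1; x₁,…,xₙ) ∈ ℤ[x₁,…,xₙ]`. -/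
noncomputable def pPol (n : ℕ) : MvPolynomial ℕ ℤ :=
  Phi n 1 fun i => X i

/-- Reduction of the integer coefficients mod `2`. -/
noncomputable def toF2 : MvPolynomial ℕ ℤ →+* MvPolynomial ℕ (ZMod 2) :=
  MvPolynomial.map (Int.castRingHom (ZMod 2))

lemma Phi_succ {R : Type*} [CommRing R] (n : ℕ) (x0 : R) (x : ℕ → R) :
    Phi (n + 1) x0 x = Phi n x0 x * Phi n (x0 + x (n + 1)) x := by
  have h : Finset.Icc 1 (n + 1) = insert (n + 1) (Finset.Icc 1 n) :=
    (Finset.insert_Icc_right_eq_Icc_add_one (by omega)).symm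
  have hdisj : Disjoint (Finset.Icc 1 n).powerset
      ((Finset.Icc 1 n).powerset.image (insert (n + 1))) := by
    rw [Finset.disjoint_left]
    intro I hI hI'
    rcases Finset.mem_image.1 hI' with ⟨J, _, rfl⟩
    have : (n + 1) ∈ Finset.Icc 1 n :=
      Finset.mem_powerset.1 hI (Finset.mem_insert_self _ _)
    simp [Finset.mem_Icc] at this
  have hnot : ∀ I ∈ (Finset.Icc 1 n).powerset, (n + 1) ∉ I := by
    intro I hI hmem
    have := Finset.mem_Icc.1 (Finset.mem_powerset.1 hI hmem)
    omega
  rw [Phi, h, Finset.powerset_insert, Finset.prod_union hdisj,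
    Finset.prod_image (by
      intro I hI J hJ hIJ
      have hI' := hnot I hI
      have hJ' := hnot J hJ
      have : (insert (n+1) I).erase (n+1) = (insert (n+1) J).erase (n+1) := by rw [hIJ]
      rwa [Finset.erase_insert hI', Finset.erase_insert hJ'] at this)]
  congr 1
  apply Finset.prod_congr rfl
  intro I hI
  rw [Finset.sum_insert (hnot I hI)]
  ring

lemma Phi_add {R : Type*} [CommRing R] (h2 : (2 : R) = 0) :
    ∀ (n : ℕ) (a b : R) (x : ℕ → R), Phi n (a + b) x = Phi n a x + Phi n b x := by
  intro n
  induction n with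
  | zero => intro a b x; simp [Phi]
  | succ n ih =>
    intro a b x
    rw [Phi_succ, Phi_succ, Phi_succ, ih a b, add_assoc a b, ih a (b + x (n+1)),
      ih b (x (n+1)), ih a (x (n+1))]
    linear_combination (Phi n a x * Phi n b x) * h2

lemma Phi_X_isHomogeneous (n m : ℕ) :
    (Phi n (X m) (fun i => X i) : MvPolynomial ℕ (ZMod 2)).IsHomogeneous (2 ^ n) := by
  have hcard : (2 : ℕ) ^ n = ∑ _I ∈ (Finset.Icc 1 n).powerset, 1 := by
    simp [Finset.card_powerset, Nat.card_Icc]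
  rw [Phi, hcard]
  apply MvPolynomial.IsHomogeneous.prod
  intro I _
  exact (isHomogeneous_X _ _).add
    (MvPolynomial.IsHomogeneous.sum I _ 1 fun i _ => isHomogeneous_X _ _)

lemma two_eq_zero : (2 : MvPolynomial ℕ (ZMod 2)) = 0 := by
  have := CharP.cast_eq_zero (MvPolynomial ℕ (ZMod 2)) 2
  exact_mod_cast this

lemma key : ∀ n : ℕ, 1 ≤ n → ∀ i : ℕ, 0 < i → i < 2 ^ (n - 1) →
    homogeneousComponent i (Phi n (1 : MvPolynomial ℕ (ZMod 2)) (fun j => X j)) = 0 := by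
  intro n
  induction n with
  | zero => omega
  | succ n ih =>
    intro _ i hi0 hi
    simp only [Nat.add_sub_cancel] at hi
    rcases Nat.eq_zero_or_pos n with rfl | hn
    · simp at hi; omega
    have h2n : 2 ^ n = 2 ^ (n - 1) * 2 := by
      rw [← pow_succ]
      congr 1
      omega
    set q := Phi n (1 : MvPolynomial ℕ (ZMod 2)) (fun j => X j) with hq
    set r := Phi n (X (n + 1) : MvPolynomial ℕ (ZMod 2)) (fun j => X j) with hr
    have hrec : Phi (n + 1) (1 : MvPolynomial ℕ (ZMod 2)) (fun j => X j)
        = q ^ 2 + q * r := by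
      rw [Phi_succ, Phi_add two_eq_zero]
      ring
    rw [hrec, map_add]
    have h1 : homogeneousComponent i (q ^ 2) = 0 := by
      conv_lhs => rw [← sum_homogeneousComponent q]
      rw [sum_pow_char, map_sum]
      apply Finset.sum_eq_zero
      intro j _
      have hj : ((homogeneousComponent j q) ^ 2).IsHomogeneous (j * 2) :=
        (homogeneousComponent_isHomogeneous j q).pow 2
      rcases eq_or_ne i (j * 2) with rfl | hne
      · have hj0 : homogeneousComponent j q = 0 := ih hn j (by omega) (by omega)
        simp [hj0]
      · rw [homogeneousComponent_of_mem ((mem_homogeneousSubmodule _ _).2 hj),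
          if_neg hne]
    have h2 : homogeneousComponent i (q * r) = 0 := by
      conv_lhs => rw [← sum_homogeneousComponent q, Finset.sum_mul]
      rw [map_sum]
      apply Finset.sum_eq_zero
      intro j _
      have hj : ((homogeneousComponent j q) * r).IsHomogeneous (j + 2 ^ n) :=
        (homogeneousComponent_isHomogeneous j q).mul (Phi_X_isHomogeneous n (n + 1))
      rw [homogeneousComponent_of_mem ((mem_homogeneousSubmodule _ _).2 hj),
        if_neg (by omega)]
    rw [h1, h2, add_zero]

lemma toF2_pPol (n : ℕ) :
    toF2 (pPol n) = Phi n (1 : MvPolynomial ℕ (ZMod 2)) (fun j => X j) := by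
  simp only [toF2, pPol, Phi, map_prod, map_add, map_one, map_sum, MvPolynomial.map_X]

lemma toF2_homogeneousComponent (i : ℕ) (p : MvPolynomial ℕ ℤ) :
    toF2 (homogeneousComponent i p) = homogeneousComponent i (toF2 p) := by
  apply MvPolynomial.ext
  intro d
  simp [toF2, coeff_map, coeff_homogeneousComponent, apply_ite (Int.castRingHom (ZMod 2))]

/-- For every `n ≥ 1` and every `i` with `0 < i < 2^{n−1}`,
one has `pol_i(p_n) ≡ 0 (mod 2)` in `ℤ[x₁,…,xₙ]`. -/
theorem stmt5 (n : ℕ) (hn : 1 ≤ n) (i : ℕ) (hi0 : 0 < i) (hi : i < 2 ^ (n - 1)) :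
    toF2 (homogeneousComponent i (pPol n)) = 0 := by
  rw [toF2_homogeneousComponent, toF2_pPol]
  exact key n hn i hi0 hi
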